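/- The function f(Q, R) = λ₁(R^{-1/2} Q Q^H R^{-1/2}), the largest eigenvalue of R^{-1/2} Q Q^H R^{-1/2}, is jointly convex in (Q, R) on ℂ^{N×M} × (Hermitian positive definite N×N matrices). -/

import Mathlib

open Matrix Complex
open scoped ComplexOrder

/-- The largest real eigenvalue of a complex matrix (as `sSup` of its set of real
eigenvalues); for a Hermitian matrix this is the largest eigenvalue. -/
noncomputable def lambdaMax {N : ℕ} (A : Matrix (Fin N) (Fin N) ℂ) : ℝ :=
  sSup {t : ℝ | ∃ v : Fin N → ℂ, v ≠ 0 ∧ A.mulVec v = (t : ℂ) • v}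

open Classical in
/-- The inverse of the positive definite square root of a positive definite matrix
(junk value `0` if the matrix is not positive definite). -/
noncomputable def isqrt {N : ℕ} (R : Matrix (Fin N) (Fin N) ℂ) : Matrix (Fin N) (Fin N) ℂ :=
  if h : R.PosDef then
    (h.posSemidef.1.eigenvectorUnitary.1 *
      diagonal ((↑) ∘ (Real.sqrt ∘ h.posSemidef.1.eigenvalues)) *
      (star h.posSemidef.1.eigenvectorUnitary : Matrix (Fin N) (Fin N) ℂ))⁻¹ else 0

/-- Euclidean norm of a complex vector. -/
noncomputable def vecNorm {N : ℕ} (v : Fin N → ℂ) : ℝ :=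
  Real.sqrt (∑ i, Complex.normSq (v i))

/-- Frobenius norm of a complex matrix. -/
noncomputable def frobNorm {N M : ℕ} (X : Matrix (Fin N) (Fin M) ℂ) : ℝ :=
  Real.sqrt (∑ i, ∑ j, Complex.normSq (X i j))

/-! For positive definite `R` and `c ≥ 0`, the substitution `y = R^{1/2} x` in the Rayleigh
quotient of `R^{-1/2} Q Qᴴ R^{-1/2}` shows that `f(Q, R) ≤ c` iff `‖Qᴴ x‖² ≤ c · xᴴ R x` for all
`x`. So `f` is the supremum over `x` of the quadratic-over-linear functions
`‖Qᴴ x‖² / xᴴ R x`, each jointly convex because `(Q, R) ↦ (Qᴴ x, xᴴ R x)` is linear: from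
`‖u₁‖² ≤ f₁ r₁` and `‖u₂‖² ≤ f₂ r₂` the triangle inequality and AM-GM give
`‖α u₁ + (1 - α) u₂‖² ≤ (α f₁ + (1 - α) f₂) (α r₁ + (1 - α) r₂)`. -/

open scoped MatrixOrder

lemma add_sq_le_add_mul_add {a b f g r s : ℝ} (hf : 0 ≤ f) (hg : 0 ≤ g) (hr : 0 ≤ r)
    (hs : 0 ≤ s) (h₁ : a ^ 2 ≤ f * r) (h₂ : b ^ 2 ≤ g * s) :
    (a + b) ^ 2 ≤ (f + g) * (r + s) := by
  -- AM-GM: (2ab)² ≤ 4 (fs) (gr) ≤ (fs + gr)²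
  have hcross : 2 * a * b ≤ f * s + g * r := by
    refine le_of_sq_le_sq ?_ (by positivity)
    nlinarith [mul_le_mul h₁ h₂ (sq_nonneg b) (mul_nonneg hf hr), sq_nonneg (f * s - g * r)]
  nlinarith

lemma norm_smul_add_one_sub_smul_sq_le {E : Type*} [SeminormedAddCommGroup E] [NormedSpace ℝ E]
    {u₁ u₂ : E} {f₁ f₂ r₁ r₂ α : ℝ} (hf₁ : 0 ≤ f₁) (hf₂ : 0 ≤ f₂) (hr₁ : 0 ≤ r₁) (hr₂ : 0 ≤ r₂)
    (h₁ : ‖u₁‖ ^ 2 ≤ f₁ * r₁) (h₂ : ‖u₂‖ ^ 2 ≤ f₂ * r₂) (hα0 : 0 ≤ α) (hα1 : α ≤ 1) :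
    ‖α • u₁ + (1 - α) • u₂‖ ^ 2 ≤ (α * f₁ + (1 - α) * f₂) * (α * r₁ + (1 - α) * r₂) := by
  have hβ : 0 ≤ 1 - α := sub_nonneg.2 hα1
  have hscale {β f r : ℝ} {u : E} (hβ : 0 ≤ β) (h : ‖u‖ ^ 2 ≤ f * r) :
      ‖β • u‖ ^ 2 ≤ β * f * (β * r) := by
    rw [norm_smul, Real.norm_of_nonneg hβ, mul_pow]
    nlinarith [mul_le_mul_of_nonneg_left h (sq_nonneg β)]
  calc ‖α • u₁ + (1 - α) • u₂‖ ^ 2 ≤ (‖α • u₁‖ + ‖(1 - α) • u₂‖) ^ 2 := by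
        gcongr; exact norm_add_le _ _
    _ ≤ _ := add_sq_le_add_mul_add (mul_nonneg hα0 hf₁) (mul_nonneg hβ hf₂) (mul_nonneg hα0 hr₁)
        (mul_nonneg hβ hr₂) (hscale hα0 h₁) (hscale hβ h₂)

namespace Matrix

variable {n : Type*}

lemma PosDef.smul_add_one_sub_smul [Finite n] {R₁ R₂ : Matrix n n ℂ} (h₁ : R₁.PosDef)
    (h₂ : R₂.PosDef) {α : ℝ} (hα0 : 0 ≤ α) (hα1 : α ≤ 1) : (α • R₁ + (1 - α) • R₂).PosDef := by
  rcases hα1.lt_or_eq with hα | rfl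
  · exact PosDef.posSemidef_add (h₁.posSemidef.smul hα0) (h₂.smul (sub_pos.2 hα))
  · simpa using h₁

variable [Fintype n]

lemma star_mulVec_dotProduct_mulVec {R : Type*} [CommSemiring R] [StarRing R]
    (S A : Matrix n n R) (x : n → R) :
    star (S *ᵥ x) ⬝ᵥ A *ᵥ (S *ᵥ x) = star x ⬝ᵥ (Sᴴ * A * S) *ᵥ x := by
  rw [star_mulVec, ← dotProduct_mulVec, mulVec_mulVec, mulVec_mulVec, mul_assoc]

lemma re_dotProduct_mul_conjTranspose_mulVec {m : Type*} [Fintype m] (Q : Matrix n m ℂ)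
    (x : n → ℂ) : (star x ⬝ᵥ (Q * Qᴴ) *ᵥ x).re = ‖WithLp.toLp 2 (Qᴴ *ᵥ x)‖ ^ 2 := by
  rw [← mulVec_mulVec, dotProduct_mulVec, ← conjTranspose_conjTranspose Q, ← star_mulVec,
    conjTranspose_conjTranspose, ← inner_self_eq_norm_sq (𝕜 := ℂ),
    EuclideanSpace.inner_eq_star_dotProduct, dotProduct_comm]
  rfl

variable {𝕜 : Type*} [RCLike 𝕜]

lemma re_star_dotProduct_self_pos {v : n → 𝕜} (hv : v ≠ 0) : 0 < RCLike.re (star v ⬝ᵥ v) :=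
  (RCLike.pos_iff.mp (dotProduct_star_self_pos_iff.mpr hv)).1

lemma re_dotProduct_mulVec_of_mulVec_eq_smul {A : Matrix n n 𝕜} {v : n → 𝕜} {t : ℝ}
    (h : A *ᵥ v = (t : 𝕜) • v) :
    RCLike.re (star v ⬝ᵥ A *ᵥ v) = t * RCLike.re (star v ⬝ᵥ v) := by
  rw [h, dotProduct_smul, smul_eq_mul, RCLike.re_ofReal_mul]

lemma le_of_mulVec_eq_smul {A : Matrix n n 𝕜} {c t : ℝ}
    (h : ∀ x, RCLike.re (star x ⬝ᵥ A *ᵥ x) ≤ c * RCLike.re (star x ⬝ᵥ x))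
    {v : n → 𝕜} (hv : v ≠ 0) (hvt : A *ᵥ v = (t : 𝕜) • v) : t ≤ c :=
  le_of_mul_le_mul_right ((re_dotProduct_mulVec_of_mulVec_eq_smul hvt).symm.trans_le (h v))
    (re_star_dotProduct_self_pos hv)

lemma IsHermitian.re_dotProduct_mulVec_le [DecidableEq n] {A : Matrix n n 𝕜}
    (hA : A.IsHermitian) {c : ℝ} (hc : ∀ i, hA.eigenvalues i ≤ c) (x : n → 𝕜) :
    RCLike.re (star x ⬝ᵥ A *ᵥ x) ≤ c * RCLike.re (star x ⬝ᵥ x) := by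
  have hle : A ≤ algebraMap ℝ _ c := le_algebraMap_of_spectrum_le fun t ht => by
    obtain ⟨i, rfl⟩ := hA.spectrum_real_eq_range_eigenvalues ▸ ht
    exact hc i
  have h := (RCLike.nonneg_iff.mp ((le_iff.mp hle).dotProduct_mulVec_nonneg x)).1
  rw [sub_mulVec, dotProduct_sub, map_sub, Algebra.algebraMap_eq_smul_one, smul_mulVec,
    one_mulVec, dotProduct_smul, RCLike.smul_re] at h
  linarith

end Matrix

section LambdaMax

variable {N : ℕ} {A : Matrix (Fin N) (Fin N) ℂ}

lemma lambdaMax_le_of_forall_re_dotProduct_mulVec_le {c : ℝ} (hc : 0 ≤ c)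
    (h : ∀ x, (star x ⬝ᵥ A *ᵥ x).re ≤ c * (star x ⬝ᵥ x).re) : lambdaMax A ≤ c :=
  Real.sSup_le (fun _ ⟨_, hv, hvt⟩ => le_of_mulVec_eq_smul h hv hvt) hc

lemma Matrix.IsHermitian.eigenvalues_le_lambdaMax (hA : A.IsHermitian) (i : Fin N) :
    hA.eigenvalues i ≤ lambdaMax A := by
  have hbdd : BddAbove {t : ℝ | ∃ v : Fin N → ℂ, v ≠ 0 ∧ A *ᵥ v = (t : ℂ) • v} :=
    ⟨⨆ j, hA.eigenvalues j, fun _ ⟨_, hv, hvt⟩ => le_of_mulVec_eq_smul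
      (hA.re_dotProduct_mulVec_le (le_ciSup (Set.finite_range _).bddAbove)) hv hvt⟩
  refine le_csSup hbdd ⟨hA.eigenvectorBasis i, ?_, ?_⟩
  · simpa using hA.eigenvectorBasis.orthonormal.ne_zero i
  · rw [hA.mulVec_eigenvectorBasis, ← Complex.coe_smul]

lemma Matrix.IsHermitian.re_dotProduct_mulVec_le_lambdaMax (hA : A.IsHermitian)
    (x : Fin N → ℂ) : (star x ⬝ᵥ A *ᵥ x).re ≤ lambdaMax A * (star x ⬝ᵥ x).re :=
  hA.re_dotProduct_mulVec_le hA.eigenvalues_le_lambdaMax x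

lemma Matrix.PosSemidef.lambdaMax_nonneg (hA : A.PosSemidef) : 0 ≤ lambdaMax A :=
  Real.sSup_nonneg fun _ ⟨v, hv, hvt⟩ => by
    have h := (Complex.nonneg_iff.mp (hA.dotProduct_mulVec_nonneg v)).1
    exact nonneg_of_mul_nonneg_left (h.trans_eq (re_dotProduct_mulVec_of_mulVec_eq_smul hvt))
      (re_star_dotProduct_self_pos hv)

end LambdaMax

section Isqrt

variable {N : ℕ} {R B : Matrix (Fin N) (Fin N) ℂ}

lemma isqrt_eq_inv_sqrt (hR : R.PosDef) : isqrt R = (CFC.sqrt R)⁻¹ := by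
  rw [isqrt, dif_pos hR, CFC.sqrt_eq_cfc, cfc_nnreal_eq_real _ R, hR.posSemidef.1.cfc_eq]
  simp [IsHermitian.cfc, Function.comp_def, max_eq_left (hR.posSemidef.eigenvalues_nonneg _)]

lemma isUnit_sqrt (hR : R.PosDef) : IsUnit (CFC.sqrt R) :=
  (CFC.isUnit_sqrt_iff R).mpr hR.isUnit

lemma conjTranspose_sqrt : (CFC.sqrt R)ᴴ = CFC.sqrt R :=
  (CFC.sqrt_nonneg R).posSemidef.1.eq

lemma isqrt_conjTranspose (hR : R.PosDef) : (isqrt R)ᴴ = isqrt R := by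
  rw [isqrt_eq_inv_sqrt hR, conjTranspose_nonsing_inv, conjTranspose_sqrt]

lemma star_sqrt_mulVec_dotProduct_isqrt_conj (hR : R.PosDef) (x : Fin N → ℂ) :
    star (CFC.sqrt R *ᵥ x) ⬝ᵥ (isqrt R * B * isqrt R) *ᵥ (CFC.sqrt R *ᵥ x) =
      star x ⬝ᵥ B *ᵥ x := by
  have hdet := (isUnit_iff_isUnit_det _).mp (isUnit_sqrt hR)
  rw [star_mulVec_dotProduct_mulVec, conjTranspose_sqrt, isqrt_eq_inv_sqrt hR,
    ← mul_assoc (CFC.sqrt R), nonsing_inv_mul_cancel_right _ _ hdet,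
    mul_nonsing_inv_cancel_left _ _ hdet]

lemma star_sqrt_mulVec_dotProduct_self (hR : R.PosDef) (x : Fin N → ℂ) :
    star (CFC.sqrt R *ᵥ x) ⬝ᵥ (CFC.sqrt R *ᵥ x) = star x ⬝ᵥ R *ᵥ x := by
  simpa [conjTranspose_sqrt, CFC.sqrt_mul_sqrt_self R hR.posSemidef.nonneg] using
    star_mulVec_dotProduct_mulVec (CFC.sqrt R) 1 x

lemma re_dotProduct_mulVec_le_lambdaMax_isqrt_conj (hR : R.PosDef) (hB : B.IsHermitian)
    (x : Fin N → ℂ) :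
    (star x ⬝ᵥ B *ᵥ x).re ≤ lambdaMax (isqrt R * B * isqrt R) * (star x ⬝ᵥ R *ᵥ x).re := by
  have hA : (isqrt R * B * isqrt R).IsHermitian := by
    simpa [isqrt_conjTranspose hR] using isHermitian_conjTranspose_mul_mul (isqrt R) hB
  have h := hA.re_dotProduct_mulVec_le_lambdaMax (CFC.sqrt R *ᵥ x)
  rwa [star_sqrt_mulVec_dotProduct_isqrt_conj hR, star_sqrt_mulVec_dotProduct_self hR] at h

lemma lambdaMax_isqrt_conj_le (hR : R.PosDef) {c : ℝ} (hc : 0 ≤ c)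
    (h : ∀ x, (star x ⬝ᵥ B *ᵥ x).re ≤ c * (star x ⬝ᵥ R *ᵥ x).re) :
    lambdaMax (isqrt R * B * isqrt R) ≤ c := by
  refine lambdaMax_le_of_forall_re_dotProduct_mulVec_le hc
    ((mulVec_surjective_iff_isUnit.mpr (isUnit_sqrt hR)).forall.mpr fun x => ?_)
  rw [star_sqrt_mulVec_dotProduct_isqrt_conj hR, star_sqrt_mulVec_dotProduct_self hR]
  exact h x

lemma lambdaMax_isqrt_conj_nonneg (hR : R.PosDef) (hB : B.PosSemidef) :
    0 ≤ lambdaMax (isqrt R * B * isqrt R) := by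
  have h := hB.conjTranspose_mul_mul_same (isqrt R)
  rw [isqrt_conjTranspose hR] at h
  exact h.lambdaMax_nonneg

end Isqrt

/-- `f(Q,R) = λ₁(R^{-1/2} Q Qᴴ R^{-1/2})` is jointly convex in `(Q,R)` on
`ℂ^{N×M} ×` (Hermitian positive definite matrices). -/
theorem lambdaMax_jointly_convex {N M : ℕ}
    (Q₁ Q₂ : Matrix (Fin N) (Fin M) ℂ) (R₁ R₂ : Matrix (Fin N) (Fin N) ℂ)
    (hR₁ : R₁.PosDef) (hR₂ : R₂.PosDef)
    (α : ℝ) (hα0 : 0 ≤ α) (hα1 : α ≤ 1) :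
    lambdaMax (isqrt (α • R₁ + (1 - α) • R₂) *
        ((α • Q₁ + (1 - α) • Q₂) * (α • Q₁ + (1 - α) • Q₂)ᴴ) *
        isqrt (α • R₁ + (1 - α) • R₂))
      ≤ α * lambdaMax (isqrt R₁ * (Q₁ * Q₁ᴴ) * isqrt R₁)
        + (1 - α) * lambdaMax (isqrt R₂ * (Q₂ * Q₂ᴴ) * isqrt R₂) := by
  have hQ₁ := posSemidef_self_mul_conjTranspose Q₁
  have hQ₂ := posSemidef_self_mul_conjTranspose Q₂
  have hf₁ := lambdaMax_isqrt_conj_nonneg hR₁ hQ₁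
  have hf₂ := lambdaMax_isqrt_conj_nonneg hR₂ hQ₂
  refine lambdaMax_isqrt_conj_le (hR₁.smul_add_one_sub_smul hR₂ hα0 hα1)
    (add_nonneg (mul_nonneg hα0 hf₁) (mul_nonneg (sub_nonneg.2 hα1) hf₂)) fun x => ?_
  have hr₁ := (Complex.nonneg_iff.mp (hR₁.posSemidef.dotProduct_mulVec_nonneg x)).1
  have hr₂ := (Complex.nonneg_iff.mp (hR₂.posSemidef.dotProduct_mulVec_nonneg x)).1
  have h₁ := re_dotProduct_mulVec_le_lambdaMax_isqrt_conj hR₁ hQ₁.1 x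
  have h₂ := re_dotProduct_mulVec_le_lambdaMax_isqrt_conj hR₂ hQ₂.1 x
  rw [re_dotProduct_mul_conjTranspose_mulVec] at h₁ h₂ ⊢
  simpa [add_mulVec, smul_mulVec, dotProduct_add, dotProduct_smul] using
    norm_smul_add_one_sub_smul_sq_le hf₁ hf₂ hr₁ hr₂ h₁ h₂ hα0 hα1
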